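/- Let k > 1 and n ≥ 1 be integers. Let m = ∏_{p | k} p^{v_p(n)} and N = n/m. Then the number of distinct irreducible factors of Φ_k(x^n) over ℚ equals τ(N), the number of positive divisors of N. -/

import Mathlib

/-!
Write `n = m * N`, where `m` collects the prime powers of `n` at primes dividing `k`, so that `N`
is coprime to `k * m`. Expanding by a prime `p` sends `Φ_j` to `Φ_{jp}` if `p ∣ j` and to
`Φ_{jp} * Φ_j` otherwise. Iterating, `Φ_k(x^m) = Φ_{km}` and then
`Φ_{km}(x^N) = ∏_{d ∣ N} Φ_{kmd}`, a product of pairwise distinct irreducible polynomials over `ℚ`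
indexed by the divisors of `N`.
-/

open Polynomial UniqueFactorizationMonoid

theorem Nat.Coprime.prod_divisors_mul {M : Type*} [CommMonoid M] {a b : ℕ} (hab : a.Coprime b)
    (f : ℕ → M) :
    ∏ x ∈ (a * b).divisors, f x = ∏ d ∈ a.divisors, ∏ e ∈ b.divisors, f (d * e) := by
  rw [hab.divisors_mul, Finset.prod_map]
  exact (Finset.prod_attach _ fun x => f (x.1 * x.2)).trans (Finset.prod_product _ _ _)

namespace Nat

variable {S : Finset ℕ}

theorem factorization_prod_pow_factorization (hS : ∀ p ∈ S, p.Prime) (n : ℕ) :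
    (∏ p ∈ S, p ^ n.factorization p).factorization = n.factorization.filter (· ∈ S) := by
  ext q
  rw [factorization_prod fun p hp => pow_ne_zero _ (hS p hp).ne_zero, Finset.sum_apply',
    Finsupp.filter_apply, ← Finset.sum_ite_eq' S q (n.factorization ·)]
  refine Finset.sum_congr rfl fun p hp => ?_
  rw [(hS p hp).factorization_pow, Finsupp.single_apply]

theorem prod_pow_factorization_dvd (hS : ∀ p ∈ S, p.Prime) (n : ℕ) :
    ∏ p ∈ S, p ^ n.factorization p ∣ n := by
  rcases eq_or_ne n 0 with rfl | hn
  · exact dvd_zero _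
  refine (factorization_le_iff_dvd (Finset.prod_ne_zero_iff.mpr fun p hp =>
    pow_ne_zero _ (hS p hp).ne_zero) hn).mp fun q => ?_
  rw [factorization_prod_pow_factorization hS, Finsupp.filter_apply]
  split_ifs <;> simp

theorem mem_of_prime_dvd_prod_pow_factorization (hS : ∀ p ∈ S, p.Prime) {n q : ℕ}
    (hq : q.Prime) (hqS : q ∣ ∏ p ∈ S, p ^ n.factorization p) : q ∈ S := by
  obtain ⟨p, hp, hqp⟩ := hq.prime.exists_mem_finset_dvd hqS
  rwa [(prime_dvd_prime_iff_eq hq (hS p hp)).mp (hq.dvd_of_dvd_pow hqp)]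

theorem not_dvd_div_prod_pow_factorization (hS : ∀ p ∈ S, p.Prime) {n q : ℕ} (hn : n ≠ 0)
    (hqS : q ∈ S) : ¬ q ∣ n / ∏ p ∈ S, p ^ n.factorization p := by
  have hdvd := prod_pow_factorization_dvd hS n
  have hquot : (n / ∏ p ∈ S, p ^ n.factorization p).factorization q = 0 := by
    rw [factorization_div hdvd, Finsupp.tsub_apply, factorization_prod_pow_factorization hS,
      Finsupp.filter_apply, if_pos hqS, Nat.sub_self]
  exact fun hq => ((hS q hqS).factorization_pos_of_dvd
    (Nat.div_ne_zero_iff_of_dvd hdvd |>.mpr ⟨hn, ne_zero_of_dvd_ne_zero hn hdvd⟩) hq).ne' hquot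

end Nat

namespace Polynomial

variable (R : Type*) [CommRing R]

theorem expand_cyclotomic_of_forall_prime_dvd {s k : ℕ} (hs : s ≠ 0)
    (hsk : ∀ p, p.Prime → p ∣ s → p ∣ k) :
    expand R s (cyclotomic k R) = cyclotomic (k * s) R := by
  induction s using Nat.recOnMul generalizing k with
  | zero => exact absurd rfl hs
  | one => simp
  | prime p hp => exact cyclotomic_expand_eq_cyclotomic hp (hsk p hp dvd_rfl) R
  | mul a b iha ihb =>
    obtain ⟨ha, hb⟩ := mul_ne_zero_iff.mp hs
    rw [expand_mul, ihb hb fun p hp hpb => hsk p hp (hpb.mul_left a),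
      iha ha fun p hp hpa => (hsk p hp (hpa.mul_right b)).mul_right b, mul_assoc, mul_comm b]

theorem expand_prime_pow_cyclotomic_of_not_dvd {p k : ℕ} (hp : p.Prime) (hpk : ¬ p ∣ k) (a : ℕ) :
    expand R (p ^ a) (cyclotomic k R) = ∏ i ∈ Finset.range (a + 1), cyclotomic (k * p ^ i) R := by
  induction a with
  | zero => simp
  | succ a ih =>
    have hpa : ∀ q, q.Prime → q ∣ p ^ a → q ∣ k * p := fun q hq hqa =>
      ((Nat.prime_dvd_prime_iff_eq hq hp).mp (hq.dvd_of_dvd_pow hqa)) ▸ dvd_mul_left q k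
    rw [pow_succ, expand_mul, cyclotomic_expand_eq_cyclotomic_mul hp hpk, map_mul, ih,
      expand_cyclotomic_of_forall_prime_dvd R (pow_ne_zero a hp.ne_zero) hpa,
      Finset.prod_range_succ _ (a + 1), mul_comm, mul_assoc k, ← pow_succ']

theorem expand_cyclotomic_of_coprime {s k : ℕ} (hs : s ≠ 0) (hsk : s.Coprime k) :
    expand R s (cyclotomic k R) = ∏ d ∈ s.divisors, cyclotomic (k * d) R := by
  induction s using Nat.recOnPosPrimePosCoprime generalizing k with
  | zero => exact absurd rfl hs
  | one => simp
  | prime_pow p a hp ha =>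
    have hpk : ¬ p ∣ k := (Nat.Prime.coprime_iff_not_dvd hp).mp
      (Nat.Coprime.coprime_dvd_left (dvd_pow_self p ha.ne') hsk)
    rw [Nat.prod_divisors_prime_pow hp, expand_prime_pow_cyclotomic_of_not_dvd R hp hpk]
  | coprime a b _ _ hab iha ihb =>
    obtain ⟨ha, hb⟩ := mul_ne_zero_iff.mp hs
    rw [expand_mul, ihb hb (Nat.Coprime.coprime_dvd_left (dvd_mul_left b a) hsk), map_prod,
      hab.prod_divisors_mul, Finset.prod_comm]
    refine Finset.prod_congr rfl fun e he => ?_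
    rw [iha ha (Nat.Coprime.mul_right (Nat.Coprime.coprime_dvd_left (dvd_mul_right a b) hsk)
      (hab.coprime_dvd_right (Nat.dvd_of_mem_divisors he)))]
    exact Finset.prod_congr rfl fun d _ => by rw [mul_assoc, mul_comm e]

theorem normalizedFactors_prod_cyclotomic_rat {s : Finset ℕ} (hs : 0 ∉ s) :
    normalizedFactors (∏ i ∈ s, cyclotomic i ℚ) = s.val.map (cyclotomic · ℚ) := by
  have hirr : ∀ f ∈ s.val.map (cyclotomic · ℚ), Irreducible f := by
    simp only [Multiset.mem_map, Finset.mem_val]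
    rintro _ ⟨i, hi, rfl⟩
    exact cyclotomic.irreducible_rat (Nat.pos_of_ne_zero (ne_of_mem_of_not_mem hi hs))
  rw [Finset.prod_eq_multiset_prod, normalizedFactors_prod_eq _ hirr, Multiset.map_map]
  exact Multiset.map_congr rfl fun i _ => (cyclotomic.monic i ℚ).normalize_eq_self

theorem card_toFinset_normalizedFactors_prod_cyclotomic_rat {s : Finset ℕ} (hs : 0 ∉ s) :
    (normalizedFactors (∏ i ∈ s, cyclotomic i ℚ)).toFinset.card = s.card := by
  rw [normalizedFactors_prod_cyclotomic_rat hs, Multiset.toFinset_map, Finset.val_toFinset,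
    Finset.card_image_of_injective _ cyclotomic_injective]

end Polynomial

theorem card_irreducible_factors_cyclotomic_comp_X_pow
    (k n m N : ℕ) (hk : 1 < k) (hn : 1 ≤ n)
    (hm : m = ∏ p ∈ k.primeFactors, p ^ (n.factorization p))
    (hN : N = n / m) :
    (UniqueFactorizationMonoid.normalizedFactors
        ((cyclotomic k ℚ).comp (X ^ n))).toFinset.card = N.divisors.card := by
  have hk0 : k ≠ 0 := by omega
  have hn0 : n ≠ 0 := by omega
  have hS : ∀ p ∈ k.primeFactors, p.Prime := fun p => Nat.prime_of_mem_primeFactors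
  have hmn : m ∣ n := hm ▸ Nat.prod_pow_factorization_dvd hS n
  have hm0 : m ≠ 0 := ne_zero_of_dvd_ne_zero hn0 hmn
  have hN0 : N ≠ 0 := hN ▸ (Nat.div_ne_zero_iff_of_dvd hmn).mpr ⟨hn0, hm0⟩
  have hmk : ∀ p, p.Prime → p ∣ m → p ∈ k.primeFactors := fun p hp hpm =>
    Nat.mem_of_prime_dvd_prod_pow_factorization hS hp (hm ▸ hpm)
  have hNkm : N.Coprime (k * m) := Nat.coprime_of_dvd fun p hp hpN hpkm => by
    have hpk : p ∈ k.primeFactors := (hp.dvd_mul.mp hpkm).elim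
      (fun hpk => Nat.mem_primeFactors.mpr ⟨hp, hpk, hk0⟩) (hmk p hp)
    exact Nat.not_dvd_div_prod_pow_factorization hS hn0 hpk (hm ▸ hN ▸ hpN)
  have hexpand : (cyclotomic k ℚ).comp (X ^ n) = ∏ d ∈ N.divisors, cyclotomic (k * m * d) ℚ := by
    rw [← expand_eq_comp_X_pow, ← Nat.div_mul_cancel hmn, ← hN, expand_mul,
      expand_cyclotomic_of_forall_prime_dvd ℚ hm0 fun p hp hpm => Nat.dvd_of_mem_primeFactors
        (hmk p hp hpm), expand_cyclotomic_of_coprime ℚ hN0 hNkm]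
  have hinj : Function.Injective (k * m * ·) := mul_right_injective₀ (mul_ne_zero hk0 hm0)
  rw [hexpand, ← Finset.prod_image (f := (cyclotomic · ℚ)) fun d _ e _ hde => hinj hde,
    card_toFinset_normalizedFactors_prod_cyclotomic_rat, Finset.card_image_of_injective _ hinj]
  simp [hk0, hm0]
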